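/- There exist a two-state space, a menu {f} and a menu {g,h}, and two information structures δ_p and π such that b^u_{\{f\}}(δ_p) > b^u_{\{g,h\}}(δ_p) while b^u_{\{f\}}(π) < b^u_{\{g,h\}}(π); hence the BML unanimity preference with Π = {δ_p, π} leaves {f} and {g,h} incomparable. -/

import Mathlib

/-!
With no information (the point mass at the uniform prior), the constant act `f` is worth 2
while the best of `g` and `h` is worth only 3/2. Under full information the decision maker
learns the state and picks `g` in `ω₁` and `h` in `ω₂`, so `{g, h}` is worth 3 while `{f}` still
gets 2. The two information structures therefore rank the menus in opposite ways.
-/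

open MeasureTheory

structure Menu (Ω V : Type*) where
  acts : Finset (Ω → V)
  nonempty : acts.Nonempty

noncomputable def Menu.phi {Ω V : Type*} [Fintype Ω] (u : V → ℝ) (F : Menu Ω V)
    (p : Ω → ℝ) : ℝ :=
  F.acts.sup' F.nonempty fun f => ∑ ω, u (f ω) * p ω

noncomputable def bval {Ω V : Type*} [Fintype Ω] (u : V → ℝ) (F : Menu Ω V)
    (π : Measure ↥(stdSimplex ℝ Ω)) : ℝ :=
  ∫ p, F.phi u (p : Ω → ℝ) ∂π

noncomputable def Menu.mix {Ω V : Type*} [AddCommMonoid V] [Module ℝ V]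
    (α : ℝ) (F G : Menu Ω V) : Menu Ω V :=
  letI : DecidableEq (Ω → V) := Classical.decEq _
  ⟨(F.acts ×ˢ G.acts).image (fun fg ω => α • fg.1 ω + (1 - α) • fg.2 ω),
   Finset.Nonempty.image (F.nonempty.product G.nonempty) _⟩

noncomputable def Menu.single {Ω V : Type*} (f : Ω → V) : Menu Ω V :=
  ⟨{f}, Finset.singleton_nonempty f⟩

noncomputable def Menu.pair {Ω V : Type*} (f g : Ω → V) : Menu Ω V :=
  letI : DecidableEq (Ω → V) := Classical.decEq _
  ⟨{f, g}, Finset.insert_nonempty f {g}⟩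

open stdSimplex

section MenuValues

variable {Ω V : Type*} [Fintype Ω]

theorem Menu.phi_single (u : V → ℝ) (f : Ω → V) (p : Ω → ℝ) :
    (Menu.single f).phi u p = ∑ ω, u (f ω) * p ω := by
  simp [Menu.single, Menu.phi]

theorem Menu.phi_pair (u : V → ℝ) (g h : Ω → V) (p : Ω → ℝ) :
    (Menu.pair g h).phi u p = max (∑ ω, u (g ω) * p ω) (∑ ω, u (h ω) * p ω) := by
  classical
  simp [Menu.pair, Menu.phi]

theorem Menu.phi_vertex [DecidableEq Ω] (u : V → ℝ) (F : Menu Ω V) (ω : Ω) :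
    F.phi u (Pi.single ω 1) = F.acts.sup' F.nonempty fun f => u (f ω) := by
  simp [Menu.phi, Pi.single_apply]

theorem bval_dirac (u : V → ℝ) (F : Menu Ω V) (p : stdSimplex ℝ Ω) :
    bval u F (Measure.dirac p) = F.phi u p :=
  integral_dirac _ p

/-- The signal that reveals the state: the posterior is the vertex `ω` with probability `p ω`. -/
noncomputable def fullInformation [DecidableEq Ω] (p : stdSimplex ℝ Ω) :
    Measure (stdSimplex ℝ Ω) :=
  ∑ ω, ENNReal.ofReal (p ω) • Measure.dirac (vertex ω)

instance [DecidableEq Ω] (p : stdSimplex ℝ Ω) : IsProbabilityMeasure (fullInformation p) :=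
  ⟨by simp [fullInformation, ← ENNReal.ofReal_sum_of_nonneg, stdSimplex.sum_eq_one p]⟩

theorem bval_fullInformation [DecidableEq Ω] (u : V → ℝ) (F : Menu Ω V) (p : stdSimplex ℝ Ω) :
    bval u F (fullInformation p) = ∑ ω, p ω * F.acts.sup' F.nonempty fun f => u (f ω) := by
  rw [bval, fullInformation, integral_finsetSum_measure fun ω _ => ?_]
  · simp [integral_smul_measure, integral_dirac, Menu.phi_vertex]
  · exact (integrable_dirac (by simp)).smul_measure ENNReal.ofReal_ne_top

end MenuValues

theorem stmt7 :
    ∃ (f g h : Fin 2 → ℝ) (π₁ π₂ : Measure ↥(stdSimplex ℝ (Fin 2))),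
      π₁ ≠ π₂ ∧ IsProbabilityMeasure π₁ ∧ IsProbabilityMeasure π₂ ∧
      bval (fun x : ℝ => x) (Menu.pair g h) π₁ < bval (fun x : ℝ => x) (Menu.single f) π₁ ∧
      bval (fun x : ℝ => x) (Menu.single f) π₂ < bval (fun x : ℝ => x) (Menu.pair g h) π₂ ∧
      -- hence the BML unanimity preference with Π = {π₁, π₂} leaves {f} and {g,h} incomparable
      ¬ (∀ π ∈ ({π₁, π₂} : Set (Measure ↥(stdSimplex ℝ (Fin 2)))),
          bval (fun x : ℝ => x) (Menu.pair g h) π ≤ bval (fun x : ℝ => x) (Menu.single f) π) ∧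
      ¬ (∀ π ∈ ({π₁, π₂} : Set (Measure ↥(stdSimplex ℝ (Fin 2)))),
          bval (fun x : ℝ => x) (Menu.single f) π ≤ bval (fun x : ℝ => x) (Menu.pair g h) π) := by
  set u : ℝ → ℝ := fun x => x
  set p : stdSimplex ℝ (Fin 2) := barycenter
  set f : Fin 2 → ℝ := fun _ => 2
  set g : Fin 2 → ℝ := ![3, 0]
  set h : Fin 2 → ℝ := ![0, 3]
  have hp : ∀ ω, p ω = 1 / 2 := fun ω => (barycenter_apply ω).trans (by norm_num)
  have uninformed_f : bval u (Menu.single f) (Measure.dirac p) = 2 := by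
    norm_num [bval_dirac, Menu.phi_single, f, u, hp]
  have uninformed_gh : bval u (Menu.pair g h) (Measure.dirac p) = 3 / 2 := by
    norm_num [bval_dirac, Menu.phi_pair, g, h, u, hp]
  have informed_f : bval u (Menu.single f) (fullInformation p) = 2 := by
    norm_num [bval_fullInformation, Menu.single, f, u, hp]
  have informed_gh : bval u (Menu.pair g h) (fullInformation p) = 3 := by
    norm_num [bval_fullInformation, Menu.pair, g, h, u, hp]
  refine ⟨f, g, h, Measure.dirac p, fullInformation p, fun heq => ?_, inferInstance,
    inferInstance, by linarith, by linarith, fun H => ?_, fun H => ?_⟩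
  · rw [heq, informed_gh] at uninformed_gh
    norm_num at uninformed_gh
  · linarith [H _ (Set.mem_insert_of_mem _ rfl)]
  · linarith [H _ (Set.mem_insert _ _)]
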